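/- Suppose ΦΦᵀ = U W Uᵀ where U ∈ ℝ^{P×K} and W is diagonal with nonnegative entries wₖ, and let θₜ = (ΦΦᵀ + δI)⁻¹Φy. Then the K-prior K(θ) = (δ/2)‖θ − θₜ‖² + ∑ₖ (wₖ/2)(uₖᵀθₜ − uₖᵀθ)² equals the batch loss (δ/2)‖θ‖² + (1/2)‖y − Φᵀθ‖² up to an additive constant independent of θ. -/
import Mathlib


open Matrix

/-- If `ΦΦᵀ = U W Uᵀ` with `W` diagonal nonnegative and `θₜ` is the batch minimizer,
then the K-prior equals the batch loss up to an additive constant independent of `θ`. -/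
theorem kprior_eq_batch_loss_up_to_constant
    (P N K : ℕ) (Φ : Matrix (Fin P) (Fin N) ℝ) (y : Fin N → ℝ)
    (δ : ℝ) (hδ : 0 < δ)
    (U : Matrix (Fin P) (Fin K) ℝ) (w : Fin K → ℝ) (hw : ∀ k, 0 ≤ w k)
    (hUW : Φ * Φᵀ = U * Matrix.diagonal w * Uᵀ)
    (θt : Fin P → ℝ)
    (hθt : θt = (Φ * Φᵀ + δ • (1 : Matrix (Fin P) (Fin P) ℝ))⁻¹ *ᵥ (Φ *ᵥ y)) :
    ∃ c : ℝ, ∀ θ : Fin P → ℝ,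
      δ / 2 * ∑ p, (θ p - θt p) ^ 2
        + ∑ k, w k / 2 * ((∑ p, U p k * θt p) - (∑ p, U p k * θ p)) ^ 2
      = (δ / 2 * ∑ p, θ p ^ 2
          + 1 / 2 * ∑ i, (y i - ∑ p, Φ p i * θ p) ^ 2) + c := by
  classical
  set A : Matrix (Fin P) (Fin P) ℝ := Φ * Φᵀ + δ • 1 with hAdef
  -- A is positive definite, hence invertible
  have hps : (Φ * Φᵀ).PosSemidef := by
    have h := Matrix.posSemidef_self_mul_conjTranspose Φ
    rwa [Matrix.conjTranspose_eq_transpose_of_trivial] at h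
  have hone : (δ • (1 : Matrix (Fin P) (Fin P) ℝ)).PosDef := by
    rw [Matrix.smul_one_eq_diagonal]
    exact Matrix.PosDef.diagonal (fun _ => hδ)
  have hApd : A.PosDef := Matrix.PosDef.posSemidef_add hps hone
  have hdet : IsUnit A.det := hApd.det_pos.ne'.isUnit
  have hAx : A *ᵥ θt = Φ *ᵥ y := by
    rw [hθt, Matrix.mulVec_mulVec, Matrix.mul_nonsing_inv A hdet, Matrix.one_mulVec]
  -- componentwise version of A θt = Φ y
  have hp : ∀ p, (∑ i, Φ p i * ∑ q, Φ q i * θt q) + δ * θt p = ∑ i, Φ p i * y i := by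
    intro p
    have h := congrFun hAx p
    have h1 : (A *ᵥ θt) p
        = (∑ q, (∑ i, Φ p i * Φ q i) * θt q) + δ * θt p := by
      simp only [hAdef, Matrix.mulVec, dotProduct, Matrix.add_apply, Matrix.mul_apply,
        Matrix.transpose_apply, Matrix.smul_apply, Matrix.one_apply, smul_eq_mul, mul_ite,
        mul_one, mul_zero, add_mul, ite_mul, zero_mul]
      rw [Finset.sum_add_distrib, Finset.sum_ite_eq]
      simp
    have h2 : ∑ q, (∑ i, Φ p i * Φ q i) * θt q = ∑ i, Φ p i * ∑ q, Φ q i * θt q := by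
      simp_rw [Finset.sum_mul, Finset.mul_sum]
      rw [Finset.sum_comm]
      exact Finset.sum_congr rfl fun i _ => Finset.sum_congr rfl fun q _ => by ring
    have h3 : (Φ *ᵥ y) p = ∑ i, Φ p i * y i := by
      simp [Matrix.mulVec, dotProduct]
    rw [h1, h2, h3] at h
    exact h
  -- sum-swap helper
  have comm : ∀ (c : Fin N → ℝ) (θ' : Fin P → ℝ),
      ∑ p, θ' p * ∑ i, Φ p i * c i = ∑ i, c i * ∑ p, Φ p i * θ' p := by
    intro c θ'
    simp_rw [Finset.mul_sum]
    rw [Finset.sum_comm]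
    exact Finset.sum_congr rfl fun i _ => Finset.sum_congr rfl fun p _ => by ring
  -- quadratic-form expansion helper
  have expand : ∀ (m : ℕ) (B : Matrix (Fin P) (Fin m) ℝ) (c : Fin m → ℝ) (v : Fin P → ℝ),
      ∑ j, c j * (∑ p, B p j * v p) ^ 2
        = ∑ p, ∑ q, (∑ j, B p j * c j * B q j) * (v p * v q) := by
    intro m B c v
    have h1 : ∀ j, c j * (∑ p, B p j * v p) ^ 2
        = ∑ p, ∑ q, (B p j * c j * B q j) * (v p * v q) := by
      intro j
      rw [sq, Finset.sum_mul_sum, Finset.mul_sum]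
      refine Finset.sum_congr rfl fun p _ => ?_
      rw [Finset.mul_sum]
      exact Finset.sum_congr rfl fun q _ => by ring
    simp_rw [h1]
    rw [Finset.sum_comm]
    refine Finset.sum_congr rfl fun p _ => ?_
    rw [Finset.sum_comm]
    refine Finset.sum_congr rfl fun q _ => ?_
    rw [← Finset.sum_mul]
  -- entrywise version of  ΦΦᵀ = U W Uᵀ
  have hent : ∀ p q, ∑ k, U p k * w k * U q k = ∑ i, Φ p i * 1 * Φ q i := by
    intro p q
    have h := congrFun (congrFun hUW p) q
    simp only [Matrix.mul_apply, Matrix.transpose_apply, Matrix.diagonal_apply, mul_ite,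
      ite_mul, mul_zero, zero_mul, Finset.sum_ite_eq', Finset.mem_univ, if_true] at h
    simpa [mul_comm, mul_assoc, mul_left_comm] using h.symm
  -- key quadratic identity
  have quad : ∀ v : Fin P → ℝ,
      ∑ k, w k * (∑ p, U p k * v p) ^ 2 = ∑ i, (∑ p, Φ p i * v p) ^ 2 := by
    intro v
    have h2 : ∑ i, (1 : ℝ) * (∑ p, Φ p i * v p) ^ 2
        = ∑ p, ∑ q, (∑ i, Φ p i * 1 * Φ q i) * (v p * v q) := expand N Φ (fun _ => 1) v
    rw [expand K U w v]
    simp_rw [hent]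
    rw [← h2]
    simp
  refine ⟨δ / 2 * ∑ p, θt p ^ 2 + 1 / 2 * ∑ i, (∑ p, Φ p i * θt p) ^ 2
      - 1 / 2 * ∑ i, y i ^ 2, fun θ => ?_⟩
  -- rewrite the K-prior quadratic term
  have hk : ∑ k, w k / 2 * ((∑ p, U p k * θt p) - (∑ p, U p k * θ p)) ^ 2
      = 1 / 2 * ∑ i, (∑ p, Φ p i * (θt p - θ p)) ^ 2 := by
    rw [← quad (fun p => θt p - θ p), Finset.mul_sum]
    refine Finset.sum_congr rfl fun k _ => ?_
    rw [← Finset.sum_sub_distrib]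
    simp_rw [mul_sub]
    ring
  rw [hk]
  -- expand all squares
  have e1 : ∑ p, (θ p - θt p) ^ 2
      = ∑ p, θ p ^ 2 - 2 * ∑ p, θ p * θt p + ∑ p, θt p ^ 2 := by
    rw [Finset.mul_sum, ← Finset.sum_sub_distrib, ← Finset.sum_add_distrib]
    exact Finset.sum_congr rfl fun p _ => by ring
  have e2 : ∑ i, (∑ p, Φ p i * (θt p - θ p)) ^ 2
      = ∑ i, (∑ p, Φ p i * θt p) ^ 2
        - 2 * ∑ i, (∑ p, Φ p i * θt p) * (∑ p, Φ p i * θ p)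
        + ∑ i, (∑ p, Φ p i * θ p) ^ 2 := by
    rw [Finset.mul_sum, ← Finset.sum_sub_distrib, ← Finset.sum_add_distrib]
    refine Finset.sum_congr rfl fun i _ => ?_
    have : ∑ p, Φ p i * (θt p - θ p) = (∑ p, Φ p i * θt p) - ∑ p, Φ p i * θ p := by
      rw [← Finset.sum_sub_distrib]
      exact Finset.sum_congr rfl fun p _ => by ring
    rw [this]; ring
  have e3 : ∑ i, (y i - ∑ p, Φ p i * θ p) ^ 2
      = ∑ i, y i ^ 2 - 2 * ∑ i, y i * (∑ p, Φ p i * θ p)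
        + ∑ i, (∑ p, Φ p i * θ p) ^ 2 := by
    rw [Finset.mul_sum, ← Finset.sum_sub_distrib, ← Finset.sum_add_distrib]
    exact Finset.sum_congr rfl fun i _ => by ring
  -- the cross-term identity coming from A θt = Φ y
  have hcross : (∑ i, (∑ p, Φ p i * θt p) * (∑ p, Φ p i * θ p))
      + δ * ∑ p, θ p * θt p = ∑ i, y i * (∑ p, Φ p i * θ p) := by
    have h := Finset.sum_congr rfl fun p (_ : p ∈ Finset.univ) =>
      congrArg (fun z => θ p * z) (hp p)
    simp only [mul_add] at h
    rw [Finset.sum_add_distrib, comm (fun i => ∑ q, Φ q i * θt q) θ, comm y θ] at h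
    rw [← h, Finset.mul_sum]
    congr 1
    exact Finset.sum_congr rfl fun p _ => by ring
  rw [e1, e2, e3]
  linarith [hcross]
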